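/- arXiv:1408.5366 — 5 statements merged into one kernel-verified Lean document; each statement's English description precedes it below -/
import Mathlib

section
/- With the affine price p(z) = βz + b (β > 0, b ≥ 0) and incentives I_i(q) = (∑_{j≠i} q_j)(p(f(q_{−i}) + ∑_{j≠i} q_j) − p(‖q‖₁)) where f(q_{−i}) = ∑_{j≠i} ω_j q_j for fixed weights ω ∈ ℝ^N, there is no choice of weights ω such that ∑_{i=1}^N I_i(q) = 0 for all q ∈ ℝ_{≥0}^N, provided N ≥ 2. -/
/-!
Write `S = ∑ q`, `W = ∑ ω q`. Since `∑_{j≠i} q_j = S - q_i` and `∑_{j≠i} ω_j q_j = W - ω_i q_i`,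
the total incentive is `β` times the quadratic form `(N - 2) S W - S² + ∑ (1 + ω_j) q_j²`
(the constant `b` cancels). Testing it on a unit vector `e_k` gives `(N - 1) ω_k`, so budget
balance forces `ω = 0`; but then on `e_k + e_l` the form equals `-2`.
-/

open Finset

section
variable {ι R : Type*} [Fintype ι] [DecidableEq ι] [CommRing R]

def affinePrice (β b z : R) : R := β * z + b

def incentive (β b : R) (ω q : ι → R) (i : ι) : R :=
  (∑ j ∈ univ.erase i, q j) *
    (affinePrice β b ((∑ j ∈ univ.erase i, ω j * q j) + ∑ j ∈ univ.erase i, q j) -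
      affinePrice β b (∑ j, q j))

theorem incentive_eq (β b : R) (ω q : ι → R) (i : ι) :
    incentive β b ω q i = β * ((∑ j, q j) * (∑ j, ω j * q j) - (∑ j, q j) * q i
      - (∑ j, q j) * (ω i * q i) - (∑ j, ω j * q j) * q i + (1 + ω i) * q i ^ 2) := by
  simp only [incentive, affinePrice, sum_erase_eq_sub (mem_univ _)]
  ring

theorem sum_incentive_eq (β b : R) (ω q : ι → R) :
    ∑ i, incentive β b ω q i =
      β * ((Fintype.card ι - 2) * (∑ j, q j) * (∑ j, ω j * q j) - (∑ j, q j) ^ 2 +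
        ∑ j, (1 + ω j) * q j ^ 2) := by
  simp only [incentive_eq, ← mul_sum, sum_add_distrib, sum_sub_distrib, sum_const, card_univ,
    nsmul_eq_mul]
  ring

theorem sum_incentive_single (β b : R) (ω : ι → R) (k : ι) :
    ∑ i, incentive β b ω (Pi.single k 1) i = β * ((Fintype.card ι - 1) * ω k) := by
  rw [sum_incentive_eq]
  simp [Pi.single_apply]
  ring

theorem sum_incentive_single_add_single (β b : R) (ω : ι → R) {k l : ι} (hkl : k ≠ l) :
    ∑ i, incentive β b ω (Pi.single k 1 + Pi.single l 1) i =
      β * ((2 * Fintype.card ι - 3) * (ω k + ω l) - 2) := by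
  rw [sum_incentive_eq]
  simp [Pi.single_apply, add_mul, mul_add, sum_add_distrib, add_sq, hkl.symm]
  ring

end

theorem no_budget_balance_general (N : ℕ) (hN : 2 ≤ N) (β b : ℝ) (hβ : 0 < β) :
    ¬ ∃ ω : Fin N → ℝ, ∀ q : Fin N → ℝ, (∀ i, 0 ≤ q i) →
      ∑ i, (∑ j ∈ Finset.univ.erase i, q j) *
        ((β * ((∑ j ∈ Finset.univ.erase i, ω j * q j) +
            ∑ j ∈ Finset.univ.erase i, q j) + b) -
          (β * (∑ j, q j) + b)) = 0 := by
  rintro ⟨ω, hω⟩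
  have balanced : ∀ q : Fin N → ℝ, (∀ i, 0 ≤ q i) → ∑ i, incentive β b ω q i = 0 := hω
  have single_nonneg (k i : Fin N) : 0 ≤ (Pi.single k 1 : Fin N → ℝ) i :=
    (Pi.single_nonneg.2 zero_le_one : (0 : Fin N → ℝ) ≤ Pi.single k 1) i
  have weight_eq_zero (k : Fin N) : ω k = 0 := by
    have h := balanced _ (single_nonneg k)
    have hN' : (N : ℝ) - 1 ≠ 0 := by
      have : (2 : ℝ) ≤ N := by exact_mod_cast hN
      linarith
    rw [sum_incentive_single, Fintype.card_fin] at h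
    simpa [hβ.ne', hN'] using h
  obtain ⟨k, l, hkl⟩ : ∃ k l : Fin N, k ≠ l := ⟨⟨0, by omega⟩, ⟨1, by omega⟩, by simp⟩
  have h := balanced (Pi.single k 1 + Pi.single l 1) fun i =>
    add_nonneg (single_nonneg k i) (single_nonneg l i)
  rw [sum_incentive_single_add_single _ _ _ hkl, weight_eq_zero, weight_eq_zero] at h
  linarith

theorem no_budget_balance (N : ℕ) (hN : 2 ≤ N) (β b : ℝ) (hβ : 0 < β) (hb : 0 ≤ b) :
    ¬ ∃ ω : Fin N → ℝ, ∀ q : Fin N → ℝ, (∀ i, 0 ≤ q i) →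
      ∑ i, (∑ j ∈ Finset.univ.erase i, q j) *
        ((β * ((∑ j ∈ Finset.univ.erase i, ω j * q j) +
            ∑ j ∈ Finset.univ.erase i, q j) + b) -
          (β * (∑ j, q j) + b)) = 0 :=
  no_budget_balance_general N hN β b hβ
end

section
/- Let p be nondecreasing, μ ∈ ℝ_{≥0}^N, and define U_i(μ) = v_i(μ_i) − μ_i p(‖μ‖₁) and W_i(μ) = v_i(μ_i) − ‖μ‖₁ p(‖μ‖₁) + ‖μ_{−i}‖₁ p((N/(N−1))‖μ_{−i}‖₁). If μ_i < (1/N)∑_h μ_h and p is strictly increasing with ‖μ_{−i}‖₁ > 0, then W_i(μ) > U_i(μ); if μ_i ≥ (1/N)∑_h μ_h, then W_i(μ) ≤ U_i(μ). -/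
open Finset

theorem low_consumers_benefit (N : ℕ) (hN : 2 ≤ N) (p : ℝ → ℝ)
    (hpmono : MonotoneOn p (Set.Ici (0:ℝ)))
    (v : Fin N → ℝ → ℝ)
    (μ : Fin N → ℝ) (hμ : ∀ j, 0 ≤ μ j) (i : Fin N) :
    ((StrictMonoOn p (Set.Ici (0:ℝ))) → 0 < ∑ j ∈ Finset.univ.erase i, μ j →
      μ i < (1 / (N:ℝ)) * ∑ h, μ h →
      v i (μ i) - μ i * p (∑ h, μ h) <
        v i (μ i) - (∑ h, μ h) * p (∑ h, μ h)
          + (∑ j ∈ Finset.univ.erase i, μ j) *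
            p (((N:ℝ) / ((N:ℝ) - 1)) * ∑ j ∈ Finset.univ.erase i, μ j)) ∧
    (μ i ≥ (1 / (N:ℝ)) * ∑ h, μ h →
      v i (μ i) - (∑ h, μ h) * p (∑ h, μ h)
          + (∑ j ∈ Finset.univ.erase i, μ j) *
            p (((N:ℝ) / ((N:ℝ) - 1)) * ∑ j ∈ Finset.univ.erase i, μ j)
        ≤ v i (μ i) - μ i * p (∑ h, μ h)) := by
  set T : ℝ := ∑ j ∈ Finset.univ.erase i, μ j with hT
  set S : ℝ := ∑ h, μ h with hS
  have hST : S = μ i + T := by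
    rw [hS, hT, ← Finset.add_sum_erase Finset.univ μ (Finset.mem_univ i)]
  have hT0 : 0 ≤ T := Finset.sum_nonneg fun j _ => hμ j
  have hS0 : 0 ≤ S := Finset.sum_nonneg fun j _ => hμ j
  have hN1 : (1:ℝ) ≤ (N:ℝ) - 1 := by
    have : (2:ℝ) ≤ (N:ℝ) := by exact_mod_cast hN
    linarith
  have hc0 : 0 < (N:ℝ) / ((N:ℝ) - 1) := by positivity
  have hcT0 : 0 ≤ ((N:ℝ) / ((N:ℝ) - 1)) * T := by positivity
  constructor
  · intro hps hTpos hlt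
    have hNpos : (0:ℝ) < N := by positivity
    -- μ i < S / N  ⇒ T > S (N-1)/N ⇒ cT > S
    have hkey : S < ((N:ℝ) / ((N:ℝ) - 1)) * T := by
      rw [div_mul_eq_mul_div, lt_div_iff₀ (by linarith)]
      have he : (N:ℝ) * ((N:ℝ)⁻¹ * S) = S := by field_simp
      have h2 : (N:ℝ) * μ i < S := by
        have := mul_lt_mul_of_pos_left hlt hNpos
        rw [one_div, he] at this; linarith
      nlinarith
    have hp : p S < p (((N:ℝ) / ((N:ℝ) - 1)) * T) :=
      hps (Set.mem_Ici.mpr hS0) (Set.mem_Ici.mpr hcT0) hkey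
    have h3 : T * p S < T * p (((N:ℝ) / ((N:ℝ) - 1)) * T) :=
      mul_lt_mul_of_pos_left hp hTpos
    rw [hST] at h3 ⊢; nlinarith [h3]
  · intro hge
    have hkey : ((N:ℝ) / ((N:ℝ) - 1)) * T ≤ S := by
      rw [div_mul_eq_mul_div, div_le_iff₀ (by linarith)]
      have hNpos : (0:ℝ) < N := by positivity
      have he : (N:ℝ) * ((N:ℝ)⁻¹ * S) = S := by field_simp
      have h2 : S ≤ (N:ℝ) * μ i := by
        have := mul_le_mul_of_nonneg_left hge (le_of_lt hNpos)
        rw [one_div, he] at this; linarith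
      nlinarith
    have hp : p (((N:ℝ) / ((N:ℝ) - 1)) * T) ≤ p S :=
      hpmono (Set.mem_Ici.mpr hcT0) (Set.mem_Ici.mpr hS0) hkey
    have h3 : T * p (((N:ℝ) / ((N:ℝ) - 1)) * T) ≤ T * p S :=
      mul_le_mul_of_nonneg_left hp hT0
    rw [hST] at h3 ⊢; nlinarith [h3]
end

section
/- Let β > 0, b ≥ 0 and p(z) = βz + b, and let v_i be differentiable, concave, nondecreasing with v_i(0) = 0. If μ ∈ ℝ_{>0}^N satisfies the social-optimum FOC v_i'(μ_i) = p(‖μ‖₁) + ‖μ‖₁ p'(‖μ‖₁) for all i, then μ is a Nash equilibrium of the game with payoffs W_i(q_i, q_{−i}) = v_i(q_i) − ‖q‖₁ p(‖q‖₁) + ‖q_{−i}‖₁ p((N/(N−1))‖q_{−i}‖₁): for every i and every q_i ≥ 0, W_i(μ_i, μ_{−i}) ≥ W_i(q_i, μ_{−i}). -/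
open Finset

lemma tangent_le_concave {f : ℝ → ℝ} (hf : ConcaveOn ℝ (Set.Ici (0:ℝ)) f)
    (hd : Differentiable ℝ f) {x y : ℝ} (hx : 0 ≤ x) (hy : 0 ≤ y) :
    f y ≤ f x + deriv f x * (y - x) := by
  have hneg : ConvexOn ℝ (Set.Ici (0:ℝ)) (-f) := hf.neg
  have hdn : deriv (-f) x = -deriv f x := by
    exact deriv.neg
  rcases lt_trichotomy x y with h | h | h
  · have := hneg.deriv_le_slope hx hy h (hd.neg x)
    rw [slope_def_field, hdn] at this
    simp only [Pi.neg_apply] at this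
    have hyx : 0 < y - x := by linarith
    rw [le_div_iff₀ hyx] at this
    nlinarith [this]
  · simp [h]
  · have := hneg.slope_le_deriv hy hx h (hd.neg x)
    rw [slope_def_field, hdn] at this
    simp only [Pi.neg_apply] at this
    have hyx : 0 < x - y := by linarith
    rw [div_le_iff₀ hyx] at this
    nlinarith [this]

theorem optimum_is_nash_with_incentives (N : ℕ) (hN : 2 ≤ N) (β b : ℝ)
    (hβ : 0 < β) (hb : 0 ≤ b)
    (v : Fin N → ℝ → ℝ)
    (hvdiff : ∀ i, Differentiable ℝ (v i))
    (hvconc : ∀ i, ConcaveOn ℝ (Set.Ici (0:ℝ)) (v i))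
    (hvmono : ∀ i, MonotoneOn (v i) (Set.Ici (0:ℝ)))
    (hv0 : ∀ i, v i 0 = 0)
    (μ : Fin N → ℝ) (hμ : ∀ j, 0 < μ j)
    (hFOC : ∀ i, deriv (v i) (μ i) =
      (β * (∑ j, μ j) + b) + (∑ j, μ j) * β) :
    ∀ i : Fin N, ∀ x : ℝ, 0 ≤ x →
      v i x - (x + ∑ j ∈ Finset.univ.erase i, μ j) *
          (β * (x + ∑ j ∈ Finset.univ.erase i, μ j) + b)
        + (∑ j ∈ Finset.univ.erase i, μ j) *
          (β * (((N:ℝ) / ((N:ℝ) - 1)) * ∑ j ∈ Finset.univ.erase i, μ j) + b)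
      ≤ v i (μ i) - (∑ j, μ j) * (β * (∑ j, μ j) + b)
        + (∑ j ∈ Finset.univ.erase i, μ j) *
          (β * (((N:ℝ) / ((N:ℝ) - 1)) * ∑ j ∈ Finset.univ.erase i, μ j) + b) := by
  intro i x hx
  have hsum : (∑ j, μ j) = μ i + ∑ j ∈ Finset.univ.erase i, μ j := by
    rw [← Finset.add_sum_erase _ _ (Finset.mem_univ i)]
  have htan := tangent_le_concave (hvconc i) (hvdiff i) (le_of_lt (hμ i)) hx
  rw [hFOC i] at htan
  set S := ∑ j ∈ Finset.univ.erase i, μ j with hS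
  set T := ∑ j, μ j with hT
  rw [hsum] at htan ⊢
  nlinarith [mul_nonneg hβ.le (sq_nonneg (x - μ i)), htan]
end

section
/- Under the assumptions of the tragedy-of-the-commons setup (v_i concave nondecreasing differentiable, p convex nondecreasing strictly increasing differentiable, interior equilibria), at the Nash equilibrium ξ every agent's marginal social welfare is negative: ∂/∂q_i [∑_j U_j(q)] evaluated at ξ equals −‖ξ_{−i}‖₁ p'(‖ξ‖₁) ≤ 0, with strict inequality when ‖ξ_{−i}‖₁ > 0 and p'(‖ξ‖₁) > 0. -/
/-!
Moving only agent `i`, the social welfare is `v_i(x) + const - (x + s) p(x + s)`, where `s` is the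
total of the other agents' quantities, so its derivative at `ξ_i` is `v_i' - p(S) - S p'(S)` with
`S = ‖ξ‖₁`. Agent `i`'s own first-order condition only internalises the share `ξ_i p'(S)` of the
price effect, leaving `-(S - ξ_i) p'(S) = -‖ξ_{-i}‖₁ p'(S)`, which is `≤ 0` since `p` is monotone.
-/

open Finset

def socialWelfare {ι : Type*} [Fintype ι] (v : ι → ℝ → ℝ) (p : ℝ → ℝ) (q : ι → ℝ) : ℝ :=
  ∑ j, (v j (q j) - q j * p (∑ k, q k))

section UpdateOneAgent

variable {ι : Type*} [Fintype ι] [DecidableEq ι]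

theorem sum_apply_update_eq_add_sum_erase {M : Type*} [AddCommMonoid M] (g : ι → ℝ → M)
    (ξ : ι → ℝ) (i : ι) (x : ℝ) :
    ∑ j, g j (Function.update ξ i x j) = g i x + ∑ j ∈ univ.erase i, g j (ξ j) := by
  rw [← add_sum_erase _ _ (mem_univ i), Function.update_self]
  congr 1
  exact sum_congr rfl fun j hj => by rw [Function.update_of_ne (ne_of_mem_erase hj)]

theorem socialWelfare_update (v : ι → ℝ → ℝ) (p : ℝ → ℝ) (ξ : ι → ℝ) (i : ι) :
    (fun x => socialWelfare v p (Function.update ξ i x)) = fun x =>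
      v i x + ∑ j ∈ univ.erase i, v j (ξ j)
        - (x + ∑ j ∈ univ.erase i, ξ j) * p (x + ∑ j ∈ univ.erase i, ξ j) := by
  funext x
  rw [socialWelfare, sum_sub_distrib, ← sum_mul, sum_apply_update_eq_add_sum_erase v,
    show ∑ j, Function.update ξ i x j = _ from
      sum_apply_update_eq_add_sum_erase (fun _ y => y) ξ i x]

theorem hasDerivAt_socialWelfare_update {v : ι → ℝ → ℝ} {p : ℝ → ℝ} {ξ : ι → ℝ} {i : ι}
    (hv : DifferentiableAt ℝ (v i) (ξ i)) (hp : DifferentiableAt ℝ p (∑ j, ξ j)) :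
    HasDerivAt (fun x => socialWelfare v p (Function.update ξ i x))
      (deriv (v i) (ξ i) - p (∑ j, ξ j) - (∑ j, ξ j) * deriv p (∑ j, ξ j)) (ξ i) := by
  set s := ∑ j ∈ univ.erase i, ξ j
  have hS : ∑ j, ξ j = ξ i + s := (add_sum_erase _ _ (mem_univ i)).symm
  rw [socialWelfare_update]
  rw [hS] at hp ⊢
  have hshift : HasDerivAt (fun x => x + s) 1 (ξ i) := (hasDerivAt_id _).add_const s
  have hprice : HasDerivAt (fun x => p (x + s)) (deriv p (ξ i + s) * 1) (ξ i) :=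
    hp.hasDerivAt.comp (ξ i) hshift
  exact ((hv.hasDerivAt.add_const _).sub (hshift.mul hprice)).congr_deriv (by ring)

end UpdateOneAgent

theorem MonotoneOn.deriv_nonneg_of_mem_nhds {p : ℝ → ℝ} {s : Set ℝ} {x : ℝ}
    (hp : MonotoneOn p s) (hs : s ∈ nhds x) : 0 ≤ deriv p x :=
  hp.derivWithin_nonneg.trans_eq (derivWithin_of_mem_nhds hs)

theorem marginal_social_welfare_at_nash_general (N : ℕ)
    (v : Fin N → ℝ → ℝ) (p : ℝ → ℝ)
    (hvdiff : ∀ i, Differentiable ℝ (v i))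
    (hpdiff : Differentiable ℝ p)
    (hpmono : StrictMonoOn p (Set.Ici (0:ℝ)))
    (ξ : Fin N → ℝ) (hξ : ∀ j, 0 < ξ j)
    (hFOC : ∀ i, deriv (v i) (ξ i) =
      p (∑ j, ξ j) + ξ i * deriv p (∑ j, ξ j))
    (i : Fin N) :
    deriv (fun x : ℝ => ∑ j, (v j (Function.update ξ i x j)
        - Function.update ξ i x j * p (∑ k, Function.update ξ i x k))) (ξ i)
      = -(∑ j ∈ Finset.univ.erase i, ξ j) * deriv p (∑ j, ξ j)
    ∧ -(∑ j ∈ Finset.univ.erase i, ξ j) * deriv p (∑ j, ξ j) ≤ 0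
    ∧ (0 < ∑ j ∈ Finset.univ.erase i, ξ j → 0 < deriv p (∑ j, ξ j) →
        -(∑ j ∈ Finset.univ.erase i, ξ j) * deriv p (∑ j, ξ j) < 0) := by
  have hS : ∑ j, ξ j = ξ i + ∑ j ∈ univ.erase i, ξ j := (add_sum_erase _ _ (mem_univ i)).symm
  have hothers : 0 ≤ ∑ j ∈ univ.erase i, ξ j := sum_nonneg fun j _ => (hξ j).le
  have hprice : 0 ≤ deriv p (∑ j, ξ j) :=
    hpmono.monotoneOn.deriv_nonneg_of_mem_nhds (Ici_mem_nhds (by rw [hS]; linarith [hξ i]))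
  refine ⟨?_, ?_, fun hpos hp' => ?_⟩
  · refine (hasDerivAt_socialWelfare_update (hvdiff i _) (hpdiff _)).deriv.trans ?_
    rw [hFOC i, hS]
    ring
  · linarith [mul_nonneg hothers hprice]
  · linarith [mul_pos hpos hp']

theorem marginal_social_welfare_at_nash (N : ℕ) (hN : 1 ≤ N)
    (v : Fin N → ℝ → ℝ) (p : ℝ → ℝ)
    (hvdiff : ∀ i, Differentiable ℝ (v i))
    (hvconc : ∀ i, ConcaveOn ℝ (Set.Ici (0:ℝ)) (v i))
    (hvmono : ∀ i, MonotoneOn (v i) (Set.Ici (0:ℝ)))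
    (hpdiff : Differentiable ℝ p)
    (hpconv : ConvexOn ℝ (Set.Ici (0:ℝ)) p)
    (hpmono : StrictMonoOn p (Set.Ici (0:ℝ)))
    (ξ : Fin N → ℝ) (hξ : ∀ j, 0 < ξ j)
    (hFOC : ∀ i, deriv (v i) (ξ i) =
      p (∑ j, ξ j) + ξ i * deriv p (∑ j, ξ j))
    (i : Fin N) :
    deriv (fun x : ℝ => ∑ j, (v j (Function.update ξ i x j)
        - Function.update ξ i x j * p (∑ k, Function.update ξ i x k))) (ξ i)
      = -(∑ j ∈ Finset.univ.erase i, ξ j) * deriv p (∑ j, ξ j)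
    ∧ -(∑ j ∈ Finset.univ.erase i, ξ j) * deriv p (∑ j, ξ j) ≤ 0
    ∧ (0 < ∑ j ∈ Finset.univ.erase i, ξ j → 0 < deriv p (∑ j, ξ j) →
        -(∑ j ∈ Finset.univ.erase i, ξ j) * deriv p (∑ j, ξ j) < 0) :=
  marginal_social_welfare_at_nash_general N v p hvdiff hpdiff hpmono ξ hξ hFOC i
end

section
/- Let F = e ωᵀ − diag(ω₁,…,ω_N) for ω ∈ ℝ^N and Φ = e eᵀ − I, where e ∈ ℝ^N is the all-ones vector, N ≥ 2. Then there is no ω such that qᵀ Φ F q = qᵀ Φ q for all q ∈ ℝ_{≥0}^N. -/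
open Finset Matrix

theorem no_budget_balance_matrix (N : ℕ) (hN : 2 ≤ N) :
    ¬ ∃ ω : Fin N → ℝ,
      ∀ q : Fin N → ℝ, (∀ i, 0 ≤ q i) →
        q ⬝ᵥ ((Matrix.of fun i j : Fin N => if i = j then (0:ℝ) else 1) *ᵥ
            ((Matrix.of fun i j : Fin N => if i = j then (0:ℝ) else ω j) *ᵥ q))
          = q ⬝ᵥ ((Matrix.of fun i j : Fin N => if i = j then (0:ℝ) else 1) *ᵥ q) := by
  rintro ⟨ω, hω⟩
  have h1 : ∀ i, ω i = 0 := by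
    intro i
    have h := hω (Pi.single i 1) (fun j => by
      simp [Pi.single_apply]; split <;> norm_num)
    simp [Matrix.mulVec, dotProduct, Pi.single_apply] at h
    have hL : ∀ x : Fin N, (if x = i then (0:ℝ) else if i = x then 0 else ω i)
        = if x = i then 0 else ω i := by
      intro x
      by_cases hx : x = i
      · simp [hx]
      · simp [hx, Ne.symm hx]
    have hR : ∀ x : Fin N, (if x = i then (0:ℝ) else if x = i then 1 else 0) = 0 := by
      intro x; split_ifs <;> rfl
    simp_rw [hL, hR, Finset.sum_const_zero] at h
    rw [Finset.sum_ite, Finset.sum_const_zero, Finset.sum_const, zero_add,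
      nsmul_eq_mul] at h
    have hne : (((Finset.univ : Finset (Fin N)).filter (fun x => ¬ x = i)).card : ℝ) ≠ 0 := by
      have : i ∈ (Finset.univ : Finset (Fin N)).filter (fun x => ¬ x = i) → False := by
        simp
      have hmem : ∀ j : Fin N, j ≠ i → j ∈ (Finset.univ : Finset (Fin N)).filter (fun x => ¬ x = i) := by
        intro j hj; simp [hj]
      have : ∃ j : Fin N, j ≠ i := by
        obtain ⟨j, hj⟩ := Finset.exists_mem_ne (by simp; omega : 1 < (Finset.univ : Finset (Fin N)).card) i
        exact ⟨j, hj.2⟩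
      obtain ⟨j, hj⟩ := this
      have := Finset.card_pos.mpr ⟨j, hmem j hj⟩
      positivity
    exact (mul_eq_zero.mp h).resolve_left hne
  have h := hω (fun _ => 1) (fun _ => zero_le_one)
  simp [Matrix.mulVec, dotProduct, h1, Finset.sum_ite_eq, Finset.sum_ite,
    Finset.filter_ne, Finset.sum_const] at h
  omega
end
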